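/- arXiv:1511.02913 — 2 statements merged into one kernel-verified Lean document; each statement's English description precedes it below -/
import Mathlib

section
/- Let G be a strongly connected digraph, s a start vertex, and e=(u,v) a strong bridge that is a bridge of G_s. If w is a vertex with w ∈ D(v) and h(w) ∉ D(v) (the parent of w in the loop nesting tree H lies outside D(v)), then the set H(w) of descendants of w in H induces a strongly connected component of G\e. -/
namespace StrongConn

variable {V : Type*}

/-- `p` is a walk in the digraph `G` from `u` to `v`, recorded as the list of visited vertices. -/
def IsWalk (G : V → V → Prop) (u v : V) (p : List V) : Prop :=
  p.Chain' G ∧ p.head? = some u ∧ p.getLast? = some v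

/-- The directed edge `(a,b)` occurs on the walk `p`. -/
def EdgeOn (a b : V) (p : List V) : Prop := (a, b) ∈ p.zip p.tail

/-- `v` is reachable from `u` in `G`. -/
def Reach (G : V → V → Prop) (u v : V) : Prop := ∃ p, IsWalk G u v p

/-- `u` and `v` are strongly connected in `G`. -/
def SConn (G : V → V → Prop) (u v : V) : Prop := Reach G u v ∧ Reach G v u

def StronglyConnected (G : V → V → Prop) : Prop := ∀ u v, Reach G u v

/-- `G` with the edge `(a,b)` deleted. -/
def DelEdge (G : V → V → Prop) (a b : V) : V → V → Prop :=
  fun x y => G x y ∧ ¬(x = a ∧ y = b)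

/-- `G` with the vertex `u` (and all incident edges) deleted. -/
def DelVertex (G : V → V → Prop) (u : V) : V → V → Prop :=
  fun x y => G x y ∧ x ≠ u ∧ y ≠ u

/-- `C` is a strongly connected component of `G`. -/
def IsSCC (G : V → V → Prop) (C : Set V) : Prop :=
  C.Nonempty ∧ (∀ x ∈ C, ∀ y ∈ C, SConn G x y) ∧ ∀ x ∈ C, ∀ y, SConn G x y → y ∈ C

/-- `(a,b)` is a strong bridge: an edge whose removal increases the number of
strongly connected components, i.e. it separates some strongly connected pair. -/
def IsStrongBridge (G : V → V → Prop) (a b : V) : Prop :=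
  G a b ∧ ∃ x y, SConn G x y ∧ ¬ SConn (DelEdge G a b) x y

/-- `u` is a strong articulation point: removing it increases the number of strongly
connected components, i.e. it separates some strongly connected pair of other vertices. -/
def IsStrongArticulationPoint (G : V → V → Prop) (u : V) : Prop :=
  ∃ x y, x ≠ u ∧ y ≠ u ∧ SConn G x y ∧ ¬ SConn (DelVertex G u) x y

/-- The reverse digraph. -/
def Rev (G : V → V → Prop) : V → V → Prop := fun x y => G y x

/-- `u` dominates `v` in the flow graph `G_s`; equivalently, `u` is an ancestor of `v`
(and `v` a descendant of `u`) in the dominator tree of `G_s`. -/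
def Dom (G : V → V → Prop) (s u v : V) : Prop :=
  ∀ p, IsWalk G s v p → u ∈ p

/-- `u` is the immediate dominator of `v` in `G_s` (the parent of `v` in the dominator tree). -/
def Idom (G : V → V → Prop) (s u v : V) : Prop :=
  u ≠ v ∧ Dom G s u v ∧ ∀ w, w ≠ v → Dom G s w v → Dom G s w u

/-- Edge `(a,b)` is a bridge of the flow graph `G_s`: every walk from `s` to `b` uses it. -/
def IsBridge (G : V → V → Prop) (s a b : V) : Prop :=
  G a b ∧ ∀ p, IsWalk G s b p → EdgeOn a b p

/-- `r` is the head of some bridge of `G_s`, i.e. a non-`s` root in the bridge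
decomposition of the dominator tree. -/
def IsBridgeHead (G : V → V → Prop) (s r : V) : Prop :=
  ∃ a, IsBridge G s a r

/-- `r` is the root of the tree containing `x` in the bridge decomposition of the
dominator tree of `G_s`: `r` dominates `x`, `r` is `s` or a bridge head, and every
bridge head dominating `x` dominates `r`. -/
def IsBDRoot (G : V → V → Prop) (s r x : V) : Prop :=
  Dom G s r x ∧ (r = s ∨ IsBridgeHead G s r) ∧
    ∀ z, Dom G s z x → IsBridgeHead G s z → Dom G s z r

/-- A depth-first search tree of `G` rooted at `s`, given by a parent function and a
preorder numbering. -/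
structure DFSTree (G : V → V → Prop) (s : V) where
  parent : V → V
  pre : V → ℕ
  parent_root : parent s = s
  parent_edge : ∀ v, v ≠ s → G (parent v) v
  root_reach : ∀ v, ∃ n, parent^[n] v = s
  pre_inj : Function.Injective pre
  pre_parent : ∀ v, v ≠ s → pre (parent v) < pre v
  /-- Descendants of a vertex form a contiguous interval in preorder. -/
  interval : ∀ u v w, (∃ n, parent^[n] w = u) → pre u ≤ pre v → pre v ≤ pre w →
      ∃ n, parent^[n] v = u
  /-- The defining property of depth-first search trees: every edge going forward
  in preorder goes to a descendant. -/
  dfs_edge : ∀ u v, G u v → pre u < pre v → ∃ n, parent^[n] v = u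

/-- `u` is an ancestor of `v` in the tree `T` (every vertex is an ancestor of itself). -/
def DFSTree.Anc {G : V → V → Prop} {s : V} (T : DFSTree G s) (u v : V) : Prop :=
  ∃ n, T.parent^[n] v = u

/-- `x ∈ loop(u)` with respect to the tree-ancestor relation `tanc`: `x` is a descendant
of `u` and there is a walk from `x` to `u` using only descendants of `u`. -/
def InLoop (G : V → V → Prop) (tanc : V → V → Prop) (u x : V) : Prop :=
  tanc u x ∧ ∃ p, IsWalk G x u p ∧ ∀ y ∈ p, tanc u y

/-- `hp` is the parent function of the loop nesting tree of `G_s` with respect to the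
DFS-tree ancestor relation `tanc`: `hp x` is the nearest proper ancestor `u` of `x`
in the DFS tree with `x ∈ loop(u)`. -/
def IsLoopParent (G : V → V → Prop) (s : V) (tanc : V → V → Prop) (hp : V → V) : Prop :=
  hp s = s ∧ ∀ x, x ≠ s →
    (tanc (hp x) x ∧ hp x ≠ x ∧ InLoop G tanc (hp x) x ∧
      ∀ u, tanc u x → u ≠ x → InLoop G tanc u x → tanc u (hp x))

/-- `u` is an ancestor of `v` in the loop nesting tree with parent function `hp`. -/
def HAnc (hp : V → V) (u v : V) : Prop := ∃ n, hp^[n] v = u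

/-- `w` is the nearest common ancestor of `x` and `y` in the loop nesting tree
with parent function `hp`. -/
def HNca (hp : V → V) (x y w : V) : Prop :=
  HAnc hp w x ∧ HAnc hp w y ∧ ∀ z, HAnc hp z x → HAnc hp z y → HAnc hp z w

/-- `u` is a nontrivial dominator of `G_s`: `u ≠ s` and `u` is not a leaf of the
dominator tree (it properly dominates some vertex). -/
def NontrivialDom (G : V → V → Prop) (s u : V) : Prop :=
  u ≠ s ∧ ∃ w, w ≠ u ∧ Dom G s u w

/-- `a` and `b` are siblings in the dominator tree of `G_s`. -/
def SiblingInD (G : V → V → Prop) (s a b : V) : Prop :=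
  a ≠ b ∧ ∃ w, Idom G s w a ∧ Idom G s w b

/-- Given the bridge-decomposition root function `r` and loop-nesting parent `hp`,
`z` is a boundary vertex. -/
def Boundary (s : V) (r hp : V → V) (z : V) : Prop := z = s ∨ r (hp z) ≠ r z

/-- `z` is the nearest boundary ancestor of `x` in the loop nesting tree. -/
def IsNearestBoundary (s : V) (r hp : V → V) (x z : V) : Prop :=
  HAnc hp z x ∧ Boundary s r hp z ∧
    ∀ z', HAnc hp z' x → Boundary s r hp z' → HAnc hp z' z

/-- `x` and `y` are 2-edge-connected: no single edge deletion leaves them in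
different strongly connected components. -/
def TwoEdgeConnected (G : V → V → Prop) (x y : V) : Prop :=
  ∀ a b, G a b → SConn (DelEdge G a b) x y

/-!
For the bridge `e = (u,v)`, `D(v)` is exactly the set of vertices that `s` cannot reach in `G \ e`,
and `e` is not an edge of the subgraph induced by the DFS subtree of any vertex of `D(v)`. Since
`H(w)` is `loop(w)`, the set of descendants of `w` reaching `w` inside its DFS subtree, it is
strongly connected in `G \ e`. Conversely, the strongly connected class of `G \ e` containing
`H(w)` lies in `loop(m) = H(m)` for its vertex `m` of least preorder number, and `m ∈ D(v)`.
As `m` and `w` are `H`-ancestors of a common vertex, either `m ∈ H(w)`, and we are done, or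
`h(w) ∈ H(m)`; but then `h(w)` reaches `m` in `G \ e`, so `h(w) ∈ D(v)`.
-/

open Relation

def Induce (G : V → V → Prop) (P : V → Prop) : V → V → Prop := fun x y => G x y ∧ P x ∧ P y

theorem Induce.mono {G G' : V → V → Prop} {P Q : V → Prop} (hG : ∀ x y, G x y → G' x y)
    (hP : ∀ x, P x → Q x) : ∀ x y, Induce G P x y → Induce G' Q x y :=
  fun x y ⟨hxy, hx, hy⟩ => ⟨hG x y hxy, hP x hx, hP y hy⟩

section Walks

variable {R S : V → V → Prop} {P : V → Prop} {a b x : V} {p : List V}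

theorem reach_iff_reflTransGen : Reach R a b ↔ ReflTransGen R a b := by
  constructor
  · rintro ⟨_ | ⟨c, l⟩, hc, hh, hl⟩
    · simp at hh
    · obtain rfl : c = a := by simpa using hh
      exact List.relationReflTransGen_of_exists_isChain_cons l hc
        ((List.getLast_eq_iff_getLast?_eq_some _).2 hl)
  · intro h
    obtain ⟨l, hc, hl⟩ := List.exists_isChain_cons_of_relationReflTransGen h
    exact ⟨a :: l, hc, rfl, (List.getLast_eq_iff_getLast?_eq_some _).1 hl⟩

theorem sConn_iff_reflTransGen : SConn R a b ↔ ReflTransGen R a b ∧ ReflTransGen R b a :=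
  and_congr reach_iff_reflTransGen reach_iff_reflTransGen

theorem rel_of_edgeOn : ∀ {p : List V}, p.IsChain R → EdgeOn a b p → R a b
  | c :: d :: l, hp, h => by
    rw [List.isChain_cons_cons] at hp
    rcases List.mem_cons.1 h with h | h
    · obtain ⟨rfl, rfl⟩ : a = c ∧ b = d := by simpa using h
      exact hp.1
    · exact rel_of_edgeOn hp.2 h

theorem reflTransGen_of_mem_walk : ∀ {p : List V} {a : V}, IsWalk R a b p → x ∈ p →
    ReflTransGen R a x
  | c :: l, a, ⟨hc, hh, hl⟩, hx => by
    obtain rfl : c = a := by simpa using hh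
    rcases List.mem_cons.1 hx with rfl | hx
    · exact .refl
    · obtain ⟨d, l', rfl⟩ := List.exists_cons_of_ne_nil (List.ne_nil_of_mem hx)
      have hc := List.isChain_cons_cons.1 hc
      exact .head hc.1 (reflTransGen_of_mem_walk ⟨hc.2, rfl, by simpa using hl⟩ hx)

theorem exists_walk_forall_mem_iff :
    (∃ p, IsWalk R a b p ∧ ∀ y ∈ p, P y) ↔ P a ∧ ReflTransGen (Induce R P) a b := by
  constructor
  · rintro ⟨p, hp, hP⟩
    refine ⟨hP a (List.mem_of_mem_head? hp.2.1), reach_iff_reflTransGen.1 ⟨p, ?_, hp.2⟩⟩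
    exact hp.1.imp_of_mem_imp fun c d hc hd hcd => ⟨hcd, hP c hc, hP d hd⟩
  · rintro ⟨ha, h⟩
    obtain ⟨_ | ⟨c, l⟩, hc, hh, hl⟩ := reach_iff_reflTransGen.2 h
    · simp at hh
    · obtain rfl : c = a := by simpa using hh
      refine ⟨c :: l, ⟨hc.imp fun _ _ => And.left, rfl, hl⟩, List.forall_mem_cons.2 ⟨ha, ?_⟩⟩
      exact hc.cons_induction P l (fun _ _ h _ => h.2.2) ha

theorem inLoop_iff {tanc : V → V → Prop} :
    InLoop R tanc a x ↔ tanc a x ∧ ReflTransGen (Induce R (tanc a)) x a :=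
  and_congr_right fun h => exists_walk_forall_mem_iff.trans (and_iff_right h)

theorem reflTransGen_induce_of_cycle (hab : ReflTransGen S a b) (hba : ReflTransGen S b a) :
    ReflTransGen (Induce S fun y => ReflTransGen S a y ∧ ReflTransGen S y a) b a := by
  induction hba using ReflTransGen.head_induction_on with
  | refl => exact .refl
  | head hbc hca ih =>
    exact .head ⟨hbc, ⟨hab, .head hbc hca⟩, ⟨hab.tail hbc, hca⟩⟩ (ih (hab.tail hbc))

end Walks

section Bridges

variable {G S : V → V → Prop} {s u v q z : V}

theorem IsBridge.rel_of_reflTransGen (hbr : IsBridge G s u v) (hS : ∀ x y, S x y → G x y)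
    (h : ReflTransGen S s v) : S u v := by
  obtain ⟨p, hp⟩ := reach_iff_reflTransGen.2 h
  exact rel_of_edgeOn hp.1 (hbr.2 p ⟨hp.1.imp hS, hp.2⟩)

theorem IsBridge.ne (hbr : IsBridge G s u v) (h : ReflTransGen G s v) : u ≠ v := by
  rintro rfl
  have hloopless : ReflTransGen (fun x y => G x y ∧ x ≠ y) s u :=
    h.lift' id fun x y hxy =>
      (em (x = y)).elim (fun heq => heq ▸ .refl) fun hne => .single ⟨hxy, hne⟩
  exact (hbr.rel_of_reflTransGen (fun _ _ => And.left) hloopless).2 rfl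

theorem IsBridge.dom_iff (hbr : IsBridge G s u v) :
    Dom G s v z ↔ ¬ ReflTransGen (DelEdge G u v) s z := by
  constructor
  · intro hz h
    obtain ⟨p, hp⟩ := reach_iff_reflTransGen.2 h
    have hsv := reflTransGen_of_mem_walk hp (hz p ⟨hp.1.imp fun _ _ => And.left, hp.2⟩)
    exact (hbr.rel_of_reflTransGen (fun _ _ => And.left) hsv).2 ⟨rfl, rfl⟩
  · intro h p hp
    by_contra hv
    refine h (reach_iff_reflTransGen.1 ⟨p, ?_, hp.2⟩)
    exact hp.1.imp_of_mem_imp fun a b _ hb hab => ⟨hab, fun hab' => hv (hab'.2 ▸ hb)⟩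

theorem IsBridge.dom_of_reflTransGen (hbr : IsBridge G s u v) (hq : Dom G s v q)
    (h : ReflTransGen (DelEdge G u v) z q) : Dom G s v z :=
  hbr.dom_iff.2 fun hz => hbr.dom_iff.1 hq (hz.trans h)

end Bridges

namespace DFSTree

variable {G : V → V → Prop} {s : V} (T : DFSTree G s) {a b c : V}

theorem anc_refl (a : V) : T.Anc a a := ⟨0, rfl⟩

theorem anc_trans : T.Anc a b → T.Anc b c → T.Anc a c
  | ⟨n, hn⟩, ⟨k, hk⟩ => ⟨n + k, by rw [Function.iterate_add_apply, hk, hn]⟩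

theorem anc_root (a : V) : T.Anc s a := T.root_reach a

theorem pre_parent_le (a : V) : T.pre (T.parent a) ≤ T.pre a := by
  by_cases ha : a = s
  · rw [ha, T.parent_root]
  · exact (T.pre_parent a ha).le

theorem pre_le_of_anc : T.Anc a b → T.pre a ≤ T.pre b := by
  rintro ⟨n, rfl⟩
  induction n with
  | zero => rfl
  | succ n ih => exact (Function.iterate_succ_apply' T.parent n b ▸ T.pre_parent_le _).trans ih

theorem anc_antisymm (hab : T.Anc a b) (hba : T.Anc b a) : a = b :=
  T.pre_inj (le_antisymm (T.pre_le_of_anc hab) (T.pre_le_of_anc hba))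

theorem reflTransGen_of_anc (h : T.Anc a b) :
    ReflTransGen (Induce G fun y => T.Anc a y ∧ T.Anc y b) a b := by
  obtain ⟨n, hn⟩ := h
  induction n generalizing b with
  | zero => subst hn; exact .refl
  | succ n ih =>
    rw [Function.iterate_succ_apply] at hn
    by_cases hb : b = s
    · rw [hb, T.parent_root, Function.iterate_fixed T.parent_root] at hn
      rw [hb, ← hn]
    have hpb : T.Anc (T.parent b) b := ⟨1, rfl⟩
    have hapb : T.Anc a (T.parent b) := ⟨n, hn⟩
    refine .tail (ReflTransGen.mono ?_ _ _ (ih hn))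
      ⟨T.parent_edge b hb, ⟨hapb, hpb⟩, ⟨T.anc_trans hapb hpb, T.anc_refl b⟩⟩
    exact Induce.mono (fun _ _ => id) fun y hy => ⟨hy.1, T.anc_trans hy.2 hpb⟩

theorem anc_of_dom (h : Dom G s a b) : T.Anc a b := by
  obtain ⟨p, hp, hP⟩ := exists_walk_forall_mem_iff.2
    ⟨⟨T.anc_root s, T.anc_root b⟩, T.reflTransGen_of_anc (T.anc_root b)⟩
  exact (hP a (h p hp)).2

theorem anc_of_isBridge {u v : V} (hbr : IsBridge G s u v) : T.Anc u v :=
  (hbr.rel_of_reflTransGen (fun _ _ => And.left) (T.reflTransGen_of_anc (T.anc_root v))).2.1.2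

theorem delEdge_of_induce_anc {u v q : V} (hbr : IsBridge G s u v) (hq : Dom G s v q) :
    ∀ x y, Induce G (T.Anc q) x y → DelEdge G u v x y := by
  rintro x y ⟨hxy, hx, hy⟩
  refine ⟨hxy, ?_⟩
  rintro ⟨rfl, rfl⟩
  obtain rfl : q = y := T.anc_antisymm hy (T.anc_of_dom hq)
  have hsq : ReflTransGen G s q :=
    ReflTransGen.mono (fun _ _ => And.left) _ _ (T.reflTransGen_of_anc (T.anc_root q))
  exact hbr.ne hsq (T.anc_antisymm (T.anc_of_isBridge hbr) hx)

/-- An edge leaving the subtree of `m` forward in preorder ends at a descendant of its tail;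
any other edge ends in the preorder interval between `m` and its tail, hence in the subtree. -/
theorem anc_of_pre_le {S : V → V → Prop} {m z : V} (hS : ∀ x y, S x y → G x y)
    (hmin : ∀ y, ReflTransGen S m y → ReflTransGen S y m → T.pre m ≤ T.pre y)
    (hmz : ReflTransGen S m z) (hzm : ReflTransGen S z m) : T.Anc m z := by
  induction hmz with
  | refl => exact T.anc_refl m
  | @tail b c hmb hbc ih =>
    have hmb' : T.Anc m b := ih (.head hbc hzm)
    rcases lt_or_ge (T.pre b) (T.pre c) with hlt | hge
    · exact T.anc_trans hmb' (T.dfs_edge b c (hS b c hbc) hlt)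
    · exact T.interval m c b hmb' (hmin c (hmb.tail hbc) hzm) hge

end DFSTree

section LoopNesting

variable {G : V → V → Prop} {s : V} {T : DFSTree G s} {hp : V → V} {a b x : V}

theorem hAnc_trans {f : V → V} : HAnc f a b → HAnc f b x → HAnc f a x
  | ⟨n, hn⟩, ⟨k, hk⟩ => ⟨n + k, by rw [Function.iterate_add_apply, hk, hn]⟩

theorem hAnc_or_hAnc_of_hAnc {f : V → V} :
    HAnc f a x → HAnc f b x → HAnc f a b ∨ HAnc f b (f a) := by
  rintro ⟨i, rfl⟩ ⟨j, rfl⟩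
  rcases le_or_gt j i with hji | hij
  · exact .inl ⟨i - j, by rw [← Function.iterate_add_apply, Nat.sub_add_cancel hji]⟩
  · refine .inr ⟨j - (i + 1), ?_⟩
    rw [← Function.iterate_succ_apply' f i x, ← Function.iterate_add_apply]
    congr 1
    omega

theorem InLoop.trans (hab : InLoop G T.Anc a b) (hbx : InLoop G T.Anc b x) :
    InLoop G T.Anc a x := by
  rw [inLoop_iff] at *
  refine ⟨T.anc_trans hab.1 hbx.1, (ReflTransGen.mono ?_ _ _ hbx.2).trans hab.2⟩
  exact Induce.mono (fun _ _ => id) fun _ => T.anc_trans hab.1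

theorem inLoop_of_hAnc (hlp : IsLoopParent G s T.Anc hp) (h : HAnc hp a x) :
    InLoop G T.Anc a x := by
  obtain ⟨n, hn⟩ := h
  induction n generalizing x with
  | zero => subst hn; exact inLoop_iff.2 ⟨T.anc_refl x, .refl⟩
  | succ n ih =>
    rw [Function.iterate_succ_apply] at hn
    by_cases hx : x = s
    · rw [hx, hlp.1] at hn
      rw [hx]
      exact ih hn
    · exact (ih hn).trans (hlp.2 x hx).2.2.1

theorem hAnc_of_inLoop (hlp : IsLoopParent G s T.Anc hp) : InLoop G T.Anc a x → HAnc hp a x := by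
  induction hn : T.pre x using Nat.strong_induction_on generalizing x with
  | _ n ih =>
    intro h
    by_cases hxa : x = a
    · exact hxa ▸ ⟨0, rfl⟩
    have hxs : x ≠ s := fun hxs => hxa (hxs ▸ T.anc_antisymm (T.anc_root a) (hxs ▸ h.1))
    obtain ⟨hanc, hne, -, hmax⟩ := hlp.2 x hxs
    have hahp : T.Anc a (hp x) := hmax a h.1 (Ne.symm hxa) h
    have hloop : InLoop G T.Anc a (hp x) := by
      refine inLoop_iff.2 ⟨hahp, (ReflTransGen.mono ?_ _ _ (T.reflTransGen_of_anc hanc)).trans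
        (inLoop_iff.1 h).2⟩
      exact Induce.mono (fun _ _ => id) fun y hy => T.anc_trans hahp hy.1
    have hlt : T.pre (hp x) < n :=
      hn ▸ (T.pre_le_of_anc hanc).lt_of_ne (T.pre_inj.ne hne)
    obtain ⟨k, hk⟩ := ih _ hlt rfl hloop
    exact ⟨k + 1, by rw [Function.iterate_succ_apply, hk]⟩

theorem hAnc_iff_inLoop (hlp : IsLoopParent G s T.Anc hp) :
    HAnc hp a x ↔ InLoop G T.Anc a x :=
  ⟨inLoop_of_hAnc hlp, hAnc_of_inLoop hlp⟩

/-- The witness is the vertex of least preorder number in the strongly connected class. -/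
theorem exists_forall_hAnc_of_sConn (hlp : IsLoopParent G s T.Anc hp) {S : V → V → Prop}
    (hS : ∀ x y, S x y → G x y) (x : V) :
    ∃ m, SConn S x m ∧ ∀ y, SConn S x y → HAnc hp m y := by
  obtain ⟨m, ⟨hxm, hmx⟩, hmin⟩ := (measure T.pre).wf.has_min
    {y | ReflTransGen S x y ∧ ReflTransGen S y x} ⟨x, .refl, .refl⟩
  have hanc : ∀ y, ReflTransGen S m y → ReflTransGen S y m → T.Anc m y :=
    fun y => T.anc_of_pre_le hS fun z hmz hzm =>
      not_lt.1 (hmin z ⟨hxm.trans hmz, hzm.trans hmx⟩)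
  refine ⟨m, sConn_iff_reflTransGen.2 ⟨hxm, hmx⟩, fun y hy => ?_⟩
  obtain ⟨hxy, hyx⟩ := sConn_iff_reflTransGen.1 hy
  refine (hAnc_iff_inLoop hlp).2 (inLoop_iff.2 ⟨hanc y (hmx.trans hxy) (hyx.trans hxm), ?_⟩)
  exact ReflTransGen.mono (Induce.mono hS fun z hz => hanc z hz.1 hz.2) _ _
    (reflTransGen_induce_of_cycle (hmx.trans hxy) (hyx.trans hxm))

theorem reflTransGen_delEdge_of_hAnc {u v q z : V} (hlp : IsLoopParent G s T.Anc hp)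
    (hbr : IsBridge G s u v) (hq : Dom G s v q) (h : HAnc hp q z) :
    ReflTransGen (DelEdge G u v) z q ∧ ReflTransGen (DelEdge G u v) q z := by
  obtain ⟨hqz, hzq⟩ := inLoop_iff.1 ((hAnc_iff_inLoop hlp).1 h)
  have hdel := T.delEdge_of_induce_anc hbr hq
  refine ⟨ReflTransGen.mono hdel _ _ hzq, ReflTransGen.mono (fun x y hxy => hdel x y ?_) _ _
    (T.reflTransGen_of_anc hqz)⟩
  exact Induce.mono (fun _ _ => id) (fun _ => And.left) x y hxy

end LoopNesting

theorem stmt5_general (G : V → V → Prop) (s u v : V)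
    (hbr : IsBridge G s u v)
    (T : DFSTree G s) (hp : V → V) (hlp : IsLoopParent G s T.Anc hp)
    (w : V) (hw : Dom G s v w) (hw2 : ¬ Dom G s v (hp w)) :
    IsSCC (DelEdge G u v) {x | HAnc hp w x} := by
  have hH : ∀ x ∈ {x | HAnc hp w x},
      ReflTransGen (DelEdge G u v) x w ∧ ReflTransGen (DelEdge G u v) w x :=
    fun x hx => reflTransGen_delEdge_of_hAnc hlp hbr hw hx
  refine ⟨⟨w, 0, rfl⟩, fun x hx y hy => ?_, fun x hx y hxy => ?_⟩
  · exact sConn_iff_reflTransGen.2 ⟨(hH x hx).1.trans (hH y hy).2, (hH y hy).1.trans (hH x hx).2⟩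
  obtain ⟨m, hxm, hm⟩ := exists_forall_hAnc_of_sConn hlp (fun _ _ => And.left) x
  have hmv : Dom G s v m := hbr.dom_of_reflTransGen (hbr.dom_of_reflTransGen hw (hH x hx).1)
    (sConn_iff_reflTransGen.1 hxm).2
  rcases hAnc_or_hAnc_of_hAnc hx (hm x (sConn_iff_reflTransGen.2 ⟨.refl, .refl⟩)) with hwm | hmw
  · exact hAnc_trans hwm (hm y hxy)
  · exact absurd (hbr.dom_of_reflTransGen hmv (reflTransGen_delEdge_of_hAnc hlp hbr hmv hmw).1) hw2

/-- If `w ∈ D(v)` and `h(w) ∉ D(v)`, then `H(w)` induces a strongly connected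
component of `G \ (u,v)`. -/
theorem stmt5 (G : V → V → Prop) (hG : StronglyConnected G) (s u v : V)
    (hsb : IsStrongBridge G u v) (hbr : IsBridge G s u v)
    (T : DFSTree G s) (hp : V → V) (hlp : IsLoopParent G s T.Anc hp)
    (w : V) (hw : Dom G s v w) (hw2 : ¬ Dom G s v (hp w)) :
    IsSCC (DelEdge G u v) {x | HAnc hp w x} :=
  stmt5_general G s u v hbr T hp hlp w hw hw2

end StrongConn
end

section
/- Let G be a strongly connected digraph with start vertex s, and let e=(u,v) be a strong bridge that is a bridge in the flow graph G_s but not a bridge in the reverse flow graph G_s^R (i.e., u=d(v) and v ≠ d^R(u)). Then the subgraph of G\e induced by the vertex set V \ D(v) is a strongly connected component of G\e. -/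
/-!
Because `(u, v)` is a bridge of `G_s`, a vertex `w` lies outside `D(v)` exactly when `s` still
reaches `w` in `G \ (u, v)`: a walk from `s` avoiding `v` avoids the edge, and a walk in
`G \ (u, v)` passing through `v` would reach `v` without the bridge. Because `(u, v)` is not a
bridge of `G_s^R`, `u` still reaches `s` in `G \ (u, v)`, and then so does every vertex, since
a walk to `s` in `G` can replace each use of `(u, v)` by that detour. The vertices reachable
from `s` in a digraph in which every vertex reaches `s` form a strongly connected component.
-/

namespace StrongConn

variable {V : Type*}

theorem isChain_iff_forall_edgeOn {R : V → V → Prop} {p : List V} :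
    p.IsChain R ↔ ∀ a b, EdgeOn a b p → R a b := by
  induction p with
  | nil => simp [EdgeOn]
  | cons x t ih =>
    cases t with
    | nil => simp [EdgeOn]
    | cons y t =>
      simp only [EdgeOn, List.tail_cons, List.zip_cons_cons, List.mem_cons,
        Prod.mk.injEq] at ih ⊢
      rw [List.isChain_cons_cons, ih]
      grind

theorem reach_iff_reflTransGen_s6 {G : V → V → Prop} {a b : V} :
    Reach G a b ↔ Relation.ReflTransGen G a b := by
  constructor
  · rintro ⟨p, hchain, hhead, hlast⟩
    have hne : p ≠ [] := by rintro rfl; simp at hhead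
    rw [← (List.head_eq_iff_head?_eq_some hne).2 hhead,
      ← (List.getLast_eq_iff_getLast?_eq_some hne).2 hlast]
    exact List.relationReflTransGen_of_exists_isChain p hchain hne
  · intro h
    obtain ⟨p, hne, hchain, hhead, hlast⟩ :=
      List.exists_isChain_ne_nil_of_relationReflTransGen h
    exact ⟨p, hchain, hhead ▸ List.head?_eq_some_head hne,
      hlast ▸ List.getLast?_eq_some_getLast hne⟩

theorem Reach.refl (G : V → V → Prop) (a : V) : Reach G a a :=
  reach_iff_reflTransGen_s6.2 .refl

theorem Reach.trans {G : V → V → Prop} {a b c : V} (hab : Reach G a b) (hbc : Reach G b c) :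
    Reach G a c :=
  reach_iff_reflTransGen_s6.2 ((reach_iff_reflTransGen_s6.1 hab).trans (reach_iff_reflTransGen_s6.1 hbc))

theorem IsWalk.mono {G H : V → V → Prop} (hGH : ∀ x y, G x y → H x y) {a b : V} {p : List V}
    (hp : IsWalk G a b p) : IsWalk H a b p :=
  ⟨hp.1.imp fun x y => hGH x y, hp.2⟩

theorem IsWalk.delEdge {G : V → V → Prop} {a b x y : V} {p : List V} (hp : IsWalk G a b p)
    (hxy : ¬ EdgeOn x y p) : IsWalk (DelEdge G x y) a b p := by
  refine ⟨isChain_iff_forall_edgeOn.2 fun c d hcd =>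
    ⟨isChain_iff_forall_edgeOn.1 hp.1 c d hcd, ?_⟩, hp.2⟩
  rintro ⟨rfl, rfl⟩
  exact hxy hcd

theorem IsWalk.reach_of_mem {G : V → V → Prop} {a b x : V} {p : List V} (hp : IsWalk G a b p)
    (hx : x ∈ p) : Reach G a x := by
  have hne : p ≠ [] := List.ne_nil_of_mem hx
  have hhead : p.head hne = a := (List.head_eq_iff_head?_eq_some hne).2 hp.2.1
  exact reach_iff_reflTransGen_s6.2 <| List.IsChain.induction (Relation.ReflTransGen G a) p hp.1
    (fun _ _ hcd hac => hac.tail hcd) (fun _ => hhead ▸ .refl) x hx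

theorem reach_rev_iff {G : V → V → Prop} {a b : V} : Reach (Rev G) a b ↔ Reach G b a := by
  simp only [reach_iff_reflTransGen_s6]
  exact Relation.reflTransGen_swap

theorem reach_delEdge_of_reach {G : V → V → Prop} {a b t w : V} (hwt : Reach G w t)
    (hat : Reach (DelEdge G a b) a t) : Reach (DelEdge G a b) w t := by
  rw [reach_iff_reflTransGen_s6] at hwt hat ⊢
  induction hwt using Relation.ReflTransGen.head_induction_on with
  | refl => exact .refl
  | @head w x hwx _ ih =>
    by_cases hedge : w = a ∧ x = b
    · exact hedge.1 ▸ hat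
    · exact .head ⟨hwx, hedge⟩ ih

theorem reach_delEdge_of_not_dom {G : V → V → Prop} {s u v w : V} (hw : ¬ Dom G s v w) :
    Reach (DelEdge G u v) s w := by
  simp only [Dom, not_forall] at hw
  obtain ⟨p, hp, hvp⟩ := hw
  exact ⟨p, hp.delEdge fun huv => hvp (List.mem_of_mem_tail (List.of_mem_zip huv).2)⟩

theorem IsBridge.not_reach_delEdge {G : V → V → Prop} {s u v : V} (h : IsBridge G s u v) :
    ¬ Reach (DelEdge G u v) s v := by
  rintro ⟨p, hp⟩
  have huv : DelEdge G u v u v :=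
    isChain_iff_forall_edgeOn.1 hp.1 u v (h.2 p (hp.mono fun _ _ hxy => hxy.1))
  exact huv.2 ⟨rfl, rfl⟩

theorem IsBridge.not_dom_of_reach_delEdge {G : V → V → Prop} {s u v w : V}
    (h : IsBridge G s u v) (hw : Reach (DelEdge G u v) s w) : ¬ Dom G s v w := by
  intro hdom
  obtain ⟨p, hp⟩ := hw
  exact h.not_reach_delEdge (hp.reach_of_mem (hdom p (hp.mono fun _ _ hxy => hxy.1)))

theorem reach_delEdge_of_not_isBridge_rev {G : V → V → Prop} {s u v : V} (huv : G u v)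
    (h : ¬ IsBridge (Rev G) s v u) : Reach (DelEdge G u v) u s := by
  simp only [IsBridge, not_and, not_forall] at h
  obtain ⟨p, hp, hvu⟩ := h huv
  refine reach_rev_iff.1 ⟨p, (hp.delEdge hvu).mono fun x y hxy => ⟨hxy.1, ?_⟩⟩
  rintro ⟨rfl, rfl⟩
  exact hxy.2 ⟨rfl, rfl⟩

theorem isSCC_setOf_reach {G : V → V → Prop} {s : V} (hs : ∀ w, Reach G w s) :
    IsSCC G {w | Reach G s w} :=
  ⟨⟨s, Reach.refl G s⟩, fun x hx y hy => ⟨(hs x).trans hy, (hs y).trans hx⟩,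
    fun _ hx _ hxy => Reach.trans hx hxy.1⟩

theorem stmt6_general (G : V → V → Prop) (hG : StronglyConnected G) (s u v : V)
    (hbr : IsBridge G s u v) (hnbr : ¬ IsBridge (Rev G) s v u) :
    IsSCC (DelEdge G u v) {w | ¬ Dom G s v w} := by
  have hus : Reach (DelEdge G u v) u s := reach_delEdge_of_not_isBridge_rev hbr.1 hnbr
  have hC : {w | ¬ Dom G s v w} = {w | Reach (DelEdge G u v) s w} :=
    Set.ext fun _ => ⟨reach_delEdge_of_not_dom, hbr.not_dom_of_reach_delEdge⟩
  rw [hC]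
  exact isSCC_setOf_reach fun w => reach_delEdge_of_reach (hG w s) hus

/-- If `(u,v)` is a strong bridge that is a bridge of `G_s` but not of `G_s^R`, then
`V \ D(v)` is a strongly connected component of `G \ (u,v)`. -/
theorem stmt6 (G : V → V → Prop) (hG : StronglyConnected G) (s u v : V)
    (hsb : IsStrongBridge G u v)
    (hbr : IsBridge G s u v) (hnbr : ¬ IsBridge (Rev G) s v u) :
    IsSCC (DelEdge G u v) {w | ¬ Dom G s v w} :=
  stmt6_general G hG s u v hbr hnbr

end StrongConn
end
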